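/- Let n ≥ 2, let △ₙ ⊂ ℝⁿ be the convex hull of the stack-sorting iterates of τₙ = 2 3 ⋯ (n−1) n 1, let p = (p₁,…,pₙ) be any point of the affine hull of △ₙ, and let p′ = (p₁,…,p_{n−1},0). Let △ₙ′ be the image of △ₙ under the projection of ℝⁿ onto the hyperplane xₙ = 0 (setting the last coordinate of each point to 0). Then for every real λ ≥ 0, |λ(△ₙ − p) ∩ ℤⁿ| = |λ(△ₙ′ − p′) ∩ ℤⁿ|. -/

import Mathlib

/-!
Every stack-sorting iterate of `τₙ` is a permutation of `τₙ`, so all of them, and hence the whole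
affine hull of `△ₙ`, lie in the hyperplane `∑ xᵢ = ∑ τₙ`. Therefore `λ(△ₙ - p)` lies in the
hyperplane `∑ xᵢ = 0`, on which `xₙ = -(x₁ + ⋯ + x_{n-1})`: there the projection `projLast n` is
injective, and a point is a lattice point iff its projection is. Since the projection is linear,
it maps `λ(△ₙ - p)` onto `λ(△ₙ′ - p′)`.
-/

open scoped Pointwise

/-- One pass of the stack-sorting algorithm: `ssAux stack input`, where
`stack` holds the current stack contents, top first.  If the next input
entry exceeds the top of the stack, the top is popped to the output;
otherwise the entry is pushed; at the end the stack is popped entirely. -/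
def ssAux : List ℕ → List ℕ → List ℕ
  | stack, [] => stack
  | [], x :: xs => ssAux [x] xs
  | t :: ts, x :: xs =>
    if t < x then t :: ssAux ts (x :: xs) else ssAux (x :: t :: ts) xs
termination_by stack inp => stack.length + 2 * inp.length

/-- The stack-sorting map `s`: one pass of the stack-sorting algorithm. -/
def stackSort (l : List ℕ) : List ℕ := ssAux [] l

/-- A list of naturals, viewed as a point of `ℝⁿ` (entry `i` is the `i`-th
element of the list). -/
def toPoint (n : ℕ) (l : List ℕ) : Fin n → ℝ := fun i => (l.getD i 0 : ℝ)

/-- The permutation `τₙ = 2 3 ⋯ (n-1) n 1`, as a list. -/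
def tauList (n : ℕ) : List ℕ := List.range' 2 (n - 1) ++ [1]

/-- The point of `ℝⁿ` corresponding to `τₙ = 2 3 ⋯ (n-1) n 1`. -/
noncomputable def tauPt (n : ℕ) : Fin n → ℝ := toPoint n (tauList n)

/-- The set `𝒮^{τₙ} = {s⁰(τₙ), s¹(τₙ), …, s^{n-1}(τₙ)} ⊆ ℝⁿ` of
stack-sorting iterates of `τₙ`, regarded as points of `ℝⁿ`. -/
noncomputable def ssIterates (n : ℕ) : Set (Fin n → ℝ) :=
  Set.range fun i : Fin n => toPoint n (stackSort^[(i : ℕ)] (tauList n))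

/-- The simplex `△ₙ`: the convex hull of the stack-sorting iterates of
`τₙ = 2 3 ⋯ (n-1) n 1`. -/
noncomputable def ssSimplex (n : ℕ) : Set (Fin n → ℝ) :=
  convexHull ℝ (ssIterates n)

/-- `x ∈ ℝⁿ` is a lattice (integer) point if all its coordinates are integers. -/
def IsLatticePt {n : ℕ} (x : Fin n → ℝ) : Prop := ∀ i, ∃ z : ℤ, x i = (z : ℝ)

/-- The number of lattice points of a subset of `ℝⁿ`. -/
noncomputable def lattCount {n : ℕ} (S : Set (Fin n → ℝ)) : ℕ :=
  Set.ncard {x ∈ S | IsLatticePt x}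

/-- Projection of `ℝⁿ` onto the hyperplane `xₙ = 0`: the last coordinate is
set to `0`. -/
def projLast (n : ℕ) (x : Fin n → ℝ) : Fin n → ℝ := fun i =>
  if (i : ℕ) = n - 1 then 0 else x i

theorem ssAux_perm : ∀ st l : List ℕ, (ssAux st l).Perm (st ++ l)
  | st, [] => by simp [ssAux]
  | [], x :: xs => by simpa [ssAux] using ssAux_perm [x] xs
  | t :: ts, x :: xs => by
    rw [ssAux]
    split
    · exact (ssAux_perm ts (x :: xs)).cons t
    · exact (ssAux_perm (x :: t :: ts) xs).trans
        (by simpa using (List.perm_middle (a := x) (l₁ := t :: ts) (l₂ := xs)).symm)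
termination_by st l => st.length + 2 * l.length

theorem stackSort_perm (l : List ℕ) : (stackSort l).Perm l := by
  simpa [stackSort] using ssAux_perm [] l

theorem iterate_stackSort_perm (k : ℕ) (l : List ℕ) : (stackSort^[k] l).Perm l := by
  induction k with
  | zero => rfl
  | succ k ih => exact (Function.iterate_succ_apply' stackSort k l ▸ stackSort_perm _).trans ih

theorem length_tauList {n : ℕ} (hn : 1 ≤ n) : (tauList n).length = n := by
  simp only [tauList, List.length_append, List.length_range', List.length_singleton]
  omega

theorem sum_toPoint {n : ℕ} {l : List ℕ} (h : l.length = n) : ∑ i, toPoint n l i = l.sum := by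
  subst h
  simp only [toPoint, List.getD_eq_getElem?_getD, Fin.is_lt, List.getElem?_eq_getElem,
    Option.getD_some]
  exact_mod_cast Fin.sum_univ_getElem l

theorem sum_of_mem_ssIterates {n : ℕ} (hn : 1 ≤ n) {v : Fin n → ℝ} (hv : v ∈ ssIterates n) :
    ∑ i, v i = (tauList n).sum := by
  obtain ⟨k, rfl⟩ := hv
  have hperm := iterate_stackSort_perm k (tauList n)
  rw [sum_toPoint (hperm.length_eq.trans (length_tauList hn)), hperm.sum_eq]

theorem AffineMap.apply_eq_of_mem_affineSpan {k V₁ P₁ V₂ P₂ : Type*} [Ring k]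
    [AddCommGroup V₁] [Module k V₁] [AddTorsor V₁ P₁] [AddCommGroup V₂] [Module k V₂]
    [AddTorsor V₂ P₂] (f : P₁ →ᵃ[k] P₂) {s : Set P₁} {c : P₂} (hs : ∀ v ∈ s, f v = c)
    {p : P₁} (hp : p ∈ affineSpan k s) : f p = c := by
  have hfp : f p ∈ affineSpan k (f '' s) := AffineSubspace.map_span f s ▸ ⟨p, hp, rfl⟩
  have hle : affineSpan k (f '' s) ≤ affineSpan k {c} :=
    affineSpan_mono k (by rintro _ ⟨v, hv, rfl⟩; exact hs v hv)
  exact (AffineSubspace.mem_affineSpan_singleton k V₂).mp (hle hfp)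

theorem sum_of_mem_affineSpan_ssSimplex {n : ℕ} (hn : 1 ≤ n) {x : Fin n → ℝ}
    (hx : x ∈ affineSpan ℝ (ssSimplex n)) : ∑ i, x i = (tauList n).sum := by
  rw [ssSimplex, affineSpan_convexHull] at hx
  let sum : (Fin n → ℝ) →ᵃ[ℝ] ℝ := (∑ i, LinearMap.proj (R := ℝ) (φ := fun _ ↦ ℝ) i).toAffineMap
  simpa [sum] using sum.apply_eq_of_mem_affineSpan
    (fun v hv ↦ by simpa [sum] using sum_of_mem_ssIterates hn hv) hx

theorem projLast_apply_of_ne {n : ℕ} (x : Fin n → ℝ) {i : Fin n} (hi : (i : ℕ) ≠ n - 1) :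
    projLast n x i = x i :=
  if_neg hi

theorem projLast_eq_update {n : ℕ} (x : Fin n → ℝ) {i : Fin n} (hi : (i : ℕ) = n - 1) :
    projLast n x = Function.update x i 0 := by
  funext j
  by_cases hj : j = i
  · subst hj; simp [projLast, hi]
  · rw [Function.update_of_ne hj, projLast_apply_of_ne x (fun h ↦ hj (Fin.ext (h.trans hi.symm)))]

def projLastₗ (n : ℕ) : (Fin n → ℝ) →ₗ[ℝ] Fin n → ℝ :=
  LinearMap.pi fun i ↦ if (i : ℕ) = n - 1 then 0 else LinearMap.proj i

theorem coe_projLastₗ (n : ℕ) : ⇑(projLastₗ n) = projLast n := by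
  funext x i
  by_cases hi : (i : ℕ) = n - 1 <;> simp [projLastₗ, projLast, hi]

theorem apply_eq_neg_sum_projLast {n : ℕ} {x : Fin n → ℝ} (hx : ∑ j, x j = 0) {i : Fin n}
    (hi : (i : ℕ) = n - 1) : x i = -∑ j, projLast n x j := by
  rw [projLast_eq_update x hi, Finset.sum_update_of_mem (Finset.mem_univ i), zero_add]
  linarith [Finset.sum_eq_add_sum_sdiff_singleton_of_mem (Finset.mem_univ i) x]

theorem injOn_projLast {n : ℕ} : Set.InjOn (projLast n) {x | ∑ j, x j = 0} := by
  intro x hx y hy hxy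
  funext i
  by_cases hi : (i : ℕ) = n - 1
  · rw [apply_eq_neg_sum_projLast hx hi, apply_eq_neg_sum_projLast hy hi, hxy]
  · simpa only [projLast_apply_of_ne _ hi] using congrFun hxy i

theorem IsLatticePt.projLast {n : ℕ} {x : Fin n → ℝ} (hx : IsLatticePt x) :
    IsLatticePt (projLast n x) := by
  intro i
  by_cases hi : (i : ℕ) = n - 1
  · exact ⟨0, by simp [_root_.projLast, hi]⟩
  · simpa only [projLast_apply_of_ne _ hi] using hx i

theorem IsLatticePt.exists_sum_eq_intCast {n : ℕ} {x : Fin n → ℝ} (hx : IsLatticePt x) :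
    ∃ z : ℤ, ∑ i, x i = z :=
  Finset.sum_induction x (fun r ↦ ∃ z : ℤ, r = z)
    (fun _ _ ⟨a, ha⟩ ⟨b, hb⟩ ↦ ⟨a + b, by rw [ha, hb, Int.cast_add]⟩) ⟨0, by simp⟩
    (fun i _ ↦ hx i)

theorem isLatticePt_of_isLatticePt_projLast {n : ℕ} {x : Fin n → ℝ} (hx : ∑ j, x j = 0)
    (h : IsLatticePt (projLast n x)) : IsLatticePt x := by
  intro i
  by_cases hi : (i : ℕ) = n - 1
  · obtain ⟨z, hz⟩ := h.exists_sum_eq_intCast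
    exact ⟨-z, by rw [apply_eq_neg_sum_projLast hx hi, hz, Int.cast_neg]⟩
  · simpa only [projLast_apply_of_ne _ hi] using h i

theorem lattCount_image_projLast {n : ℕ} {S : Set (Fin n → ℝ)} (hS : ∀ x ∈ S, ∑ j, x j = 0) :
    lattCount (projLast n '' S) = lattCount S := by
  have hlatt : {y ∈ projLast n '' S | IsLatticePt y} = projLast n '' {x ∈ S | IsLatticePt x} := by
    ext y
    constructor
    · rintro ⟨⟨x, hxS, rfl⟩, hy⟩
      exact ⟨x, ⟨hxS, isLatticePt_of_isLatticePt_projLast (hS x hxS) hy⟩, rfl⟩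
    · rintro ⟨x, ⟨hxS, hx⟩, rfl⟩
      exact ⟨⟨x, hxS, rfl⟩, hx.projLast⟩
  rw [lattCount, lattCount, hlatt, (injOn_projLast.mono fun x hx ↦ hS x hx.1).ncard_image]

theorem LinearMap.image_smul_image_sub {R M N : Type*} [Semiring R] [AddCommGroup M]
    [AddCommGroup N] [Module R M] [Module R N] (f : M →ₗ[R] N) (c : R) (p : M) (T : Set M) :
    f '' (c • ((· - p) '' T)) = c • ((· - f p) '' (f '' T)) := by
  rw [image_smul_set, Set.image_image, Set.image_image]
  simp only [map_sub]

theorem ssSimplex_proj_lattice_count_general (n : ℕ) (hn : 2 ≤ n) (p : Fin n → ℝ)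
    (hp : p ∈ affineSpan ℝ (ssSimplex n)) (lam : ℝ) :
    lattCount (lam • ((· - p) '' ssSimplex n)) =
    lattCount (lam • ((· - projLast n p) '' (projLast n '' ssSimplex n))) := by
  have hsum : ∀ x ∈ lam • ((· - p) '' ssSimplex n), ∑ i, x i = 0 := by
    rintro _ ⟨_, ⟨q, hq, rfl⟩, rfl⟩
    simp only [Pi.smul_apply, Pi.sub_apply, smul_eq_mul, ← Finset.mul_sum,
      Finset.sum_sub_distrib, sum_of_mem_affineSpan_ssSimplex (by omega) hp,
      sum_of_mem_affineSpan_ssSimplex (by omega) (subset_affineSpan ℝ _ hq), sub_self, mul_zero]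
  rw [← coe_projLastₗ, ← LinearMap.image_smul_image_sub, coe_projLastₗ,
    lattCount_image_projLast hsum]

/-- Let `n ≥ 2`, let `p` be any point of the affine hull
of `△ₙ`, let `p′` be `p` with last coordinate replaced by `0`, and let
`△ₙ′` be the projection of `△ₙ` onto the hyperplane `xₙ = 0`.  Then for
every real `λ ≥ 0`, the dilates `λ(△ₙ - p)` and `λ(△ₙ′ - p′)` contain the
same number of integer points. -/
theorem ssSimplex_proj_lattice_count (n : ℕ) (hn : 2 ≤ n) (p : Fin n → ℝ)
    (hp : p ∈ affineSpan ℝ (ssSimplex n)) (lam : ℝ) (hlam : 0 ≤ lam) :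
    lattCount (lam • ((· - p) '' ssSimplex n)) =
    lattCount (lam • ((· - projLast n p) '' (projLast n '' ssSimplex n))) :=
  ssSimplex_proj_lattice_count_general n hn p hp lam
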